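/- arXiv:math/0412244 — 2 statements merged into one kernel-verified Lean document; each statement's English description precedes it below -/
import Mathlib

section
/- The exponential generating function ∑_{k≥0} H(k) x^k / k! of H(k), the number of partitions of a 2k-element set invariant under a fixed-point-free involution with k transpositions, equals exp((1/2)(e^x + 3)(e^x − 1)). -/
open scoped ContDiff

open Finset

private lemma my_iteratedDeriv_add {f g : ℝ → ℝ} {n : ℕ} (hf : ContDiff ℝ ∞ f)
    (hg : ContDiff ℝ ∞ g) (x : ℝ) :
    iteratedDeriv n (fun y => f y + g y) x = iteratedDeriv n f x + iteratedDeriv n g x := by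
  simp only [← iteratedDerivWithin_univ]
  exact iteratedDerivWithin_add (Set.mem_univ x) uniqueDiffOn_univ
    (hf.contDiffWithinAt.of_le (by exact_mod_cast (le_top : (n : ℕ∞) ≤ ⊤))) (hg.contDiffWithinAt.of_le (by exact_mod_cast (le_top : (n : ℕ∞) ≤ ⊤)))

private lemma leibniz_iteratedDeriv : ∀ (n : ℕ) {f g : ℝ → ℝ}, ContDiff ℝ ∞ f → ContDiff ℝ ∞ g →
    iteratedDeriv n (fun y => f y * g y) = fun x =>
      ∑ i ∈ range (n + 1), (n.choose i : ℝ) * (iteratedDeriv i f x * iteratedDeriv (n - i) g x)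
  | 0, f, g, hf, hg => by simp
  | (n+1), f, g, hf, hg => by
    have hf' : ContDiff ℝ ∞ (deriv f) := (contDiff_infty_iff_deriv.mp hf).2
    have hg' : ContDiff ℝ ∞ (deriv g) := (contDiff_infty_iff_deriv.mp hg).2
    have hd : deriv (fun y => f y * g y) = fun y => deriv f y * g y + f y * deriv g y :=
      funext fun y => deriv_mul ((hf.differentiable (by simp)) y) ((hg.differentiable (by simp)) y)
    funext x
    rw [iteratedDeriv_succ', hd]
    rw [my_iteratedDeriv_add (hf'.mul hg) (hf.mul hg'),
      leibniz_iteratedDeriv n hf' hg, leibniz_iteratedDeriv n hf hg']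
    rw [Finset.sum_choose_succ_mul (fun i j => iteratedDeriv i f x * iteratedDeriv j g x) n]
    have e1 : ∀ i ∈ range (n+1), (n.choose i : ℝ) *
        (iteratedDeriv i (deriv f) x * iteratedDeriv (n - i) g x) =
        (n.choose i : ℝ) * (iteratedDeriv (i+1) f x * iteratedDeriv (n - i) g x) := by
      intro i _; rw [← iteratedDeriv_succ']
    have e2 : ∀ i ∈ range (n+1), (n.choose i : ℝ) *
        (iteratedDeriv i f x * iteratedDeriv (n - i) (deriv g) x) =
        (n.choose i : ℝ) * (iteratedDeriv i f x * iteratedDeriv (n + 1 - i) g x) := by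
      intro i hi
      rw [← iteratedDeriv_succ']
      have hi' : i ≤ n := Nat.lt_succ_iff.mp (mem_range.mp hi)
      have h3 : n - i + 1 = n + 1 - i := by omega
      rw [h3]
    beta_reduce
    rw [Finset.sum_congr rfl e1, Finset.sum_congr rfl e2]
    exact add_comm _ _

private def Brec : ℕ → ℕ
  | 0 => 1
  | n+1 => ∑ i ∈ Finset.range (n+1), n.choose i * (2^i + 1) * Brec (n - i)
  decreasing_by exact Nat.lt_succ_of_le (Nat.sub_le n i)

private noncomputable def Ffun : ℝ → ℝ :=
  fun x => Real.exp ((1 / 2) * (Real.exp x + 3) * (Real.exp x - 1))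

private lemma Ffun_contDiff : ContDiff ℝ ∞ Ffun := by
  apply ContDiff.exp
  exact ((contDiff_const.mul (Real.contDiff_exp.add contDiff_const)).mul
    (Real.contDiff_exp.sub contDiff_const))

private lemma Ffun_deriv : deriv Ffun = fun x => (Real.exp (2*x) + Real.exp x) * Ffun x := by
  funext x
  have h1 : HasDerivAt (fun x : ℝ => (1/2) * (Real.exp x + 3) * (Real.exp x - 1))
      (((1/2) * Real.exp x) * (Real.exp x - 1) + ((1/2) * (Real.exp x + 3)) * Real.exp x) x := by
    exact (((Real.hasDerivAt_exp x).add_const 3).const_mul (1/2)).mul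
      ((Real.hasDerivAt_exp x).sub_const 1)
  have h2 := h1.exp
  rw [show Ffun = fun x => Real.exp ((1 / 2) * (Real.exp x + 3) * (Real.exp x - 1)) from rfl,
    h2.deriv]
  have h3 : Real.exp (2*x) = Real.exp x * Real.exp x := by rw [two_mul, Real.exp_add]
  show _ = _ * Ffun x
  unfold Ffun
  rw [h3]
  ring

private lemma exps_iteratedDeriv (i : ℕ) (x : ℝ) :
    iteratedDeriv i (fun x => Real.exp (2*x) + Real.exp x) x
      = 2^i * Real.exp (2*x) + Real.exp x := by
  have hf : ContDiff ℝ ∞ (fun x : ℝ => Real.exp (2*x)) :=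
    Real.contDiff_exp.comp (contDiff_const.mul contDiff_id)
  rw [my_iteratedDeriv_add hf Real.contDiff_exp x]
  rw [congrFun (iteratedDeriv_exp_const_mul i 2) x]
  congr 1
  show iteratedDeriv i Real.exp x = _
  rw [iteratedDeriv_eq_iterate, Real.iter_deriv_exp]

private lemma anal : ∀ n : ℕ, iteratedDeriv n Ffun 0 = (Brec n : ℝ) := by
  intro n
  induction n using Nat.strong_induction_on with
  | _ n ih =>
    match n with
    | 0 => simp [Ffun, Brec]
    | (n+1) =>
      rw [iteratedDeriv_succ', Ffun_deriv]
      have hf : ContDiff ℝ ∞ (fun x : ℝ => Real.exp (2*x) + Real.exp x) :=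
        (Real.contDiff_exp.comp (contDiff_const.mul contDiff_id)).add Real.contDiff_exp
      rw [congrFun (leibniz_iteratedDeriv n hf Ffun_contDiff) 0]
      rw [Brec]
      push_cast
      refine Finset.sum_congr rfl fun i hi => ?_
      rw [exps_iteratedDeriv, ih (n - i) (Nat.lt_succ_of_le (Nat.sub_le n i))]
      norm_num
      ring


private def stdInv (α : Type*) : Equiv.Perm (α × Bool) :=
  Equiv.prodCongr (Equiv.refl α) ⟨Bool.not, Bool.not, Bool.not_not, Bool.not_not⟩

@[simp] private lemma stdInv_apply {α : Type*} (p : α × Bool) : stdInv α p = (p.1, !p.2) := rfl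

private lemma setoid_comap_comap {A B C : Type*} (f : A → B) (g : B → C) (r : Setoid C) :
    Setoid.comap f (Setoid.comap g r) = Setoid.comap (g ∘ f) r := rfl

private instance setoidFinite {β : Type*} [Finite β] : Finite (Setoid β) :=
  Finite.of_injective (fun s => s.r)
    (fun s t h => Setoid.ext fun a b => iff_of_eq (congrFun (congrFun h a) b))

/-- Transport of invariant-setoid counts along a conjugating equivalence. -/
private def conjEquiv {S S' : Type*} (e : S ≃ S') (σ : Equiv.Perm S) (σ' : Equiv.Perm S')
    (hcomm : ∀ x, e (σ x) = σ' (e x)) :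
    {P : Setoid S // Setoid.comap σ P = P} ≃ {P' : Setoid S' // Setoid.comap σ' P' = P'} where
  toFun P := ⟨Setoid.comap e.symm P.1, by
    rw [setoid_comap_comap]
    have h1 : (⇑e.symm ∘ ⇑σ' : S' → S) = ⇑σ ∘ ⇑e.symm := by
      funext x
      simp only [Function.comp_apply]
      have := hcomm (e.symm x)
      rw [Equiv.apply_symm_apply] at this
      rw [← this, Equiv.symm_apply_apply]
    rw [h1, ← setoid_comap_comap, P.2]⟩
  invFun P' := ⟨Setoid.comap e P'.1, by
    rw [setoid_comap_comap]
    have h1 : (⇑e ∘ ⇑σ : S → S') = ⇑σ' ∘ ⇑e := funext fun x => hcomm x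
    rw [h1, ← setoid_comap_comap, P'.2]⟩
  left_inv P := Subtype.ext (by
    show Setoid.comap ⇑e (Setoid.comap ⇑e.symm P.1) = P.1
    apply Setoid.ext
    intro a b
    show P.1 (e.symm (e a)) (e.symm (e b)) ↔ P.1 a b
    rw [Equiv.symm_apply_apply, Equiv.symm_apply_apply])
  right_inv P' := Subtype.ext (by
    show Setoid.comap ⇑e.symm (Setoid.comap ⇑e P'.1) = P'.1
    apply Setoid.ext
    intro a b
    show P'.1 (e (e.symm a)) (e (e.symm b)) ↔ P'.1 a b
    rw [Equiv.apply_symm_apply, Equiv.apply_symm_apply])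

section Model
variable {S : Type*} (σ : Equiv.Perm S) (hσ : ∀ x, σ (σ x) = x) (hfpf : ∀ x, σ x ≠ x)

private def pairSetoid : Setoid S where
  r x y := y = x ∨ y = σ x
  iseqv := by
    constructor
    · intro x; exact Or.inl rfl
    · rintro x y (rfl | rfl)
      · exact Or.inl rfl
      · right; rw [hσ]
    · rintro x y z (rfl | rfl) h
      · exact h
      · rcases h with rfl | rfl
        · exact Or.inr rfl
        · left; rw [hσ]

include hfpf
private noncomputable def modelEquiv : S ≃ (Quotient (pairSetoid σ hσ)) × Bool := by
  classical
  exact {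
    toFun := fun x => (Quotient.mk _ x, decide (x = (Quotient.mk (pairSetoid σ hσ) x).out))
    invFun := fun p => if p.2 then p.1.out else σ p.1.out
    left_inv := by
      intro x
      have hrel : (Quotient.mk (pairSetoid σ hσ) x).out = x ∨
          (Quotient.mk (pairSetoid σ hσ) x).out = σ x := by
        have := Quotient.mk_out (s := pairSetoid σ hσ) x
        exact (Quotient.eq (r := pairSetoid σ hσ)).mp (by rw [Quotient.out_eq])
      by_cases h : x = (Quotient.mk (pairSetoid σ hσ) x).out
      · simp [h.symm]
      · have h2 : (Quotient.mk (pairSetoid σ hσ) x).out = σ x := by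
          rcases hrel with h1 | h1
          · exact absurd h1.symm h
          · exact h1
        simp [h, h2, hσ]
        exact fun h3 => h3.symm
    right_inv := by
      rintro ⟨q, b⟩
      cases b
      · show (Quotient.mk (pairSetoid σ hσ) (σ q.out),
            decide (σ q.out = (Quotient.mk (pairSetoid σ hσ) (σ q.out)).out)) = (q, false)
        have h1 : Quotient.mk (pairSetoid σ hσ) (σ q.out) = q := by
          have h0 : Quotient.mk (pairSetoid σ hσ) (σ q.out)
              = Quotient.mk (pairSetoid σ hσ) q.out :=
            Quotient.sound (Or.inr (hσ q.out).symm)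
          rw [h0, Quotient.out_eq]
        have h2 : ¬ (σ q.out = (Quotient.mk (pairSetoid σ hσ) (σ q.out)).out) := by
          rw [h1]
          intro h3
          have h4 : ⟦σ q.out⟧ = q := h1
          exact hfpf q.out (by rw [← h3]; exact (congrArg σ h3).symm ▸ hσ q.out ▸ rfl)
        simp [h1, h2]
        exact hfpf q.out
      · show (Quotient.mk (pairSetoid σ hσ) q.out,
            decide (q.out = (Quotient.mk (pairSetoid σ hσ) q.out).out)) = (q, true)
        have h1 : Quotient.mk (pairSetoid σ hσ) q.out = q := Quotient.out_eq q
        simp [h1]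
  }

private lemma modelEquiv_comm (x : S) :
    modelEquiv σ hσ hfpf (σ x) = stdInv _ (modelEquiv σ hσ hfpf x) := by
  classical
  show (Quotient.mk (pairSetoid σ hσ) (σ x),
      decide (σ x = (Quotient.mk (pairSetoid σ hσ) (σ x)).out))
    = ((Quotient.mk (pairSetoid σ hσ) x),
      !(decide (x = (Quotient.mk (pairSetoid σ hσ) x).out)))
  have h1 : Quotient.mk (pairSetoid σ hσ) (σ x) = Quotient.mk (pairSetoid σ hσ) x :=
    Quotient.sound (Or.inr (hσ x).symm)
  rw [h1]
  have hrel : (Quotient.mk (pairSetoid σ hσ) x).out = x ∨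
      (Quotient.mk (pairSetoid σ hσ) x).out = σ x :=
    (Quotient.eq (r := pairSetoid σ hσ)).mp (by rw [Quotient.out_eq])
  rcases hrel with h2 | h2
  · rw [h2]
    simp [hfpf x]
  · rw [h2]
    have h3 : x ≠ σ x := fun h => hfpf x h.symm
    simp [h3]

private lemma modelCard [Fintype S] :
    Nat.card S = 2 * Nat.card (Quotient (pairSetoid σ hσ)) := by
  rw [Nat.card_congr (modelEquiv σ hσ hfpf), Nat.card_prod]
  simp [Nat.card_eq_fintype_card]
  ring

end Model

section Master
attribute [local instance] Classical.propDecidable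

variable {α : Type*} [Fintype α] (a₀ : α) (U₀ : Finset α)

/-- The set of first coordinates of the block-pair of `(a₀, true)`. -/
private noncomputable def Ufin (P : Setoid (α × Bool)) : Finset α :=
  Finset.univ.filter (fun q => ∃ b, P (q, b) (a₀, true))

private def memB (V : Finset α) (p : α × Bool) : Prop :=
  if p.1 ∈ V then p.2 = false else p.2 = true

private lemma memB_flip (V : Finset α) (p : α × Bool) :
    memB V (p.1, !p.2) ↔ ¬ memB V p := by
  unfold memB
  by_cases h : p.1 ∈ V <;> simp [h] <;> cases p.2 <;> simp

private def inC (c : Option {V : Finset α // V ⊆ U₀.erase a₀}) (p p' : α × Bool) : Prop :=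
  match c with
  | none => True
  | some V => (memB V.1 p ↔ memB V.1 p')

private def Rrel (c : Option {V : Finset α // V ⊆ U₀.erase a₀})
    (Q : Setoid ({q : α // q ∉ U₀} × Bool)) (p p' : α × Bool) : Prop :=
  (p.1 ∈ U₀ ∧ p'.1 ∈ U₀ ∧ inC a₀ U₀ c p p') ∨
  (∃ (h : p.1 ∉ U₀) (h' : p'.1 ∉ U₀), Q (⟨p.1, h⟩, p.2) (⟨p'.1, h'⟩, p'.2))

private lemma inC_refl (c) (p : α × Bool) : inC a₀ U₀ c p p := by
  cases c <;> simp [inC]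

private lemma inC_symm (c) {p p' : α × Bool} (h : inC a₀ U₀ c p p') : inC a₀ U₀ c p' p := by
  cases c <;> simp [inC] at * <;> tauto

private lemma inC_trans (c) {p p' p'' : α × Bool} (h : inC a₀ U₀ c p p')
    (h' : inC a₀ U₀ c p' p'') : inC a₀ U₀ c p p'' := by
  cases c <;> simp [inC] at * <;> tauto

private def Rsetoid (c : Option {V : Finset α // V ⊆ U₀.erase a₀})
    (Q : Setoid ({q : α // q ∉ U₀} × Bool)) : Setoid (α × Bool) where
  r := Rrel a₀ U₀ c Q
  iseqv := by
    constructor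
    · intro p
      by_cases h : p.1 ∈ U₀
      · exact Or.inl ⟨h, h, inC_refl a₀ U₀ c p⟩
      · exact Or.inr ⟨h, h, Q.refl _⟩
    · rintro p p' (⟨h1, h2, h3⟩ | ⟨h1, h2, h3⟩)
      · exact Or.inl ⟨h2, h1, inC_symm a₀ U₀ c h3⟩
      · exact Or.inr ⟨h2, h1, Q.symm h3⟩
    · rintro p p' p'' (⟨h1, h2, h3⟩ | ⟨h1, h2, h3⟩) (⟨g1, g2, g3⟩ | ⟨g1, g2, g3⟩)
      · exact Or.inl ⟨h1, g2, inC_trans a₀ U₀ c h3 g3⟩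
      · exact absurd h2 g1
      · exact absurd g1 h2
      · exact Or.inr ⟨h1, g2, Q.trans h3 g3⟩

private lemma Rsetoid_inv (c) (Q : Setoid ({q : α // q ∉ U₀} × Bool))
    (hQ : Setoid.comap (stdInv _) Q = Q) :
    Setoid.comap (stdInv α) (Rsetoid a₀ U₀ c Q) = Rsetoid a₀ U₀ c Q := by
  apply Setoid.ext
  intro p p'
  show Rrel a₀ U₀ c Q (p.1, !p.2) (p'.1, !p'.2) ↔ Rrel a₀ U₀ c Q p p'
  unfold Rrel
  have hQ' : ∀ u v : {q : α // q ∉ U₀} × Bool, Q (u.1, !u.2) (v.1, !v.2) ↔ Q u v := by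
    intro u v
    conv_rhs => rw [← hQ]
    exact Iff.rfl
  constructor
  · rintro (⟨h1, h2, h3⟩ | ⟨h1, h2, h3⟩)
    · refine Or.inl ⟨h1, h2, ?_⟩
      cases c with
      | none => trivial
      | some V =>
        simp only [inC] at h3 ⊢
        rw [memB_flip, memB_flip] at h3
        exact not_iff_not.mp h3
    · exact Or.inr ⟨h1, h2, (hQ' (⟨p.1, h1⟩, p.2) (⟨p'.1, h2⟩, p'.2)).mp h3⟩
  · rintro (⟨h1, h2, h3⟩ | ⟨h1, h2, h3⟩)
    · refine Or.inl ⟨h1, h2, ?_⟩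
      cases c with
      | none => trivial
      | some V =>
        simp only [inC] at h3 ⊢
        rw [memB_flip, memB_flip]
        exact not_iff_not.mpr h3
    · exact Or.inr ⟨h1, h2, (hQ' (⟨p.1, h1⟩, p.2) (⟨p'.1, h2⟩, p'.2)).mpr h3⟩

private lemma Rsetoid_Ufin (hU₀ : a₀ ∈ U₀) (c) (Q : Setoid ({q : α // q ∉ U₀} × Bool)) :
    Ufin a₀ (Rsetoid a₀ U₀ c Q) = U₀ := by
  ext q
  simp only [Ufin, Finset.mem_filter, Finset.mem_univ, true_and]
  constructor
  · rintro ⟨b, (⟨h1, _, _⟩ | ⟨_, h2, _⟩)⟩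
    · exact h1
    · exact absurd hU₀ h2
  · intro hq
    cases c with
    | none => exact ⟨true, Or.inl ⟨hq, hU₀, trivial⟩⟩
    | some V =>
      refine ⟨if q ∈ V.1 then false else true, Or.inl ⟨hq, hU₀, ?_⟩⟩
      simp only [inC, memB]
      have ha : a₀ ∉ V.1 := fun h => (Finset.mem_erase.mp (V.2 h)).1 rfl
      by_cases h : q ∈ V.1 <;> simp [h, ha]

private def Qof (P : Setoid (α × Bool)) : Setoid ({q : α // q ∉ U₀} × Bool) :=
  Setoid.comap (fun p => ((p.1 : α), p.2)) P

private lemma Qof_inv (P : Setoid (α × Bool)) (hP : Setoid.comap (stdInv α) P = P) :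
    Setoid.comap (stdInv _) (Qof U₀ P) = Qof U₀ P := by
  apply Setoid.ext
  intro p p'
  show P ((p.1 : α), !p.2) ((p'.1 : α), !p'.2) ↔ P ((p.1 : α), p.2) ((p'.1 : α), p'.2)
  conv_rhs => rw [← hP]
  exact Iff.rfl

private noncomputable def cfgOf (P : Setoid (α × Bool)) : Option {V : Finset α // V ⊆ U₀.erase a₀} :=
  if P (a₀, true) (a₀, false) then none
  else some ⟨(U₀.erase a₀).filter (fun q => P (q, false) (a₀, true)), Finset.filter_subset _ _⟩

section Reconstruct
variable {α : Type*} [Fintype α] (a₀ : α) (U₀ : Finset α)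
variable (P : Setoid (α × Bool)) (hP : Setoid.comap (stdInv α) P = P)
include hP

private lemma hflip : ∀ p q : α × Bool, P (p.1, !p.2) (q.1, !q.2) ↔ P p q := by
  intro p q
  conv_rhs => rw [← hP]
  exact Iff.rfl

private lemma flipa : ∀ p : α × Bool, P (p.1, !p.2) (a₀, true) ↔ P p (a₀, false) :=
  fun p => hflip P hP p (a₀, false)

variable (hU : Ufin a₀ P = U₀)

omit hP in
include hU in
private lemma Umem : ∀ q : α, q ∈ U₀ ↔ ∃ b, P (q, b) (a₀, true) := by
  intro q
  rw [← hU]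
  simp [Ufin]

include hU

private lemma Ublock : ∀ p p' : α × Bool, P p p' → p.1 ∈ U₀ → p'.1 ∈ U₀ := by
  intro p p' hpp' hp
  obtain ⟨b, hb⟩ := (Umem a₀ U₀ P hU p.1).mp hp
  rw [Umem a₀ U₀ P hU]
  by_cases hbp : b = p.2
  · subst hbp
    have h1 : P p (a₀, true) := hb
    exact ⟨p'.2, P.trans (P.symm hpp') h1⟩
  · have hb' : b = !p.2 := by cases b <;> cases hp2 : p.2 <;> simp_all
    subst hb'
    have h1 : P p (a₀, false) := (flipa a₀ P hP p).mp hb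
    have h2 : P p' (a₀, false) := P.trans (P.symm hpp') h1
    exact ⟨!p'.2, (flipa a₀ P hP p').mpr h2⟩

private lemma blockA (hab : P (a₀, true) (a₀, false)) :
    ∀ p : α × Bool, p.1 ∈ U₀ → P p (a₀, true) := by
  intro p hp
  obtain ⟨b, hb⟩ := (Umem a₀ U₀ P hU p.1).mp hp
  by_cases hbp : b = p.2
  · subst hbp; exact hb
  · have hb' : b = !p.2 := by cases b <;> cases hp2 : p.2 <;> simp_all
    subst hb'
    have h1 : P p (a₀, false) := (flipa a₀ P hP p).mp hb
    exact P.trans h1 (P.symm hab)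

private lemma memclaim (hab : ¬ P (a₀, true) (a₀, false)) :
    ∀ (q : α) (b : Bool), q ∈ U₀ →
      (memB ((U₀.erase a₀).filter (fun q => P (q, false) (a₀, true))) (q, b) ↔
        P (q, b) (a₀, true)) := by
  intro q b hq
  set V := (U₀.erase a₀).filter (fun q => P (q, false) (a₀, true)) with hV
  have hnotboth : ∀ r : α, P (r, true) (a₀, true) → P (r, false) (a₀, true) → False := by
    intro r h1 h2
    have h3 : P (r, false) (a₀, false) := (hflip P hP (r, true) (a₀, true)).mpr h1
    exact hab (P.trans (P.symm h2) h3)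
  by_cases hqa : q = a₀
  · subst hqa
    have haV : q ∉ V := by simp [hV]
    cases b
    · simp only [memB, if_neg haV, Bool.false_eq_true, false_iff]
      exact fun h1 => hab (P.symm h1)
    · simp only [memB, if_neg haV, true_iff]
      exact P.refl _
  · have hqe : q ∈ U₀.erase a₀ := Finset.mem_erase.mpr ⟨hqa, hq⟩
    by_cases hqV : q ∈ V
    · have h1 : P (q, false) (a₀, true) := (Finset.mem_filter.mp hqV).2
      cases b
      · simp only [memB, if_pos hqV, true_iff]
        exact h1
      · simp only [memB, if_pos hqV, Bool.true_eq_false, false_iff]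
        exact fun h2 => hnotboth q h2 h1
    · have h1 : ¬ P (q, false) (a₀, true) := fun h2 => hqV (Finset.mem_filter.mpr ⟨hqe, h2⟩)
      have h2 : P (q, true) (a₀, true) := by
        obtain ⟨b', hb'⟩ := (Umem a₀ U₀ P hU q).mp hq
        cases b'
        · exact absurd hb' h1
        · exact hb'
      cases b
      · simp only [memB, if_neg hqV, Bool.false_eq_true, false_iff]
        exact h1
      · simp only [memB, if_neg hqV, true_iff]
        exact h2

private lemma reconstruct (hU₀ : a₀ ∈ U₀) :
    Rsetoid a₀ U₀ (cfgOf a₀ U₀ P) (Qof U₀ P) = P := by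
  apply Setoid.ext
  intro p p'
  show Rrel a₀ U₀ (cfgOf a₀ U₀ P) (Qof U₀ P) p p' ↔ P p p'
  by_cases hp : p.1 ∈ U₀ <;> by_cases hp' : p'.1 ∈ U₀
  · have hl : Rrel a₀ U₀ (cfgOf a₀ U₀ P) (Qof U₀ P) p p' ↔
        inC a₀ U₀ (cfgOf a₀ U₀ P) p p' := by
      unfold Rrel
      constructor
      · rintro (⟨_, _, h3⟩ | ⟨h1, _, _⟩)
        · exact h3
        · exact absurd hp h1
      · intro h
        exact Or.inl ⟨hp, hp', h⟩
    rw [hl]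
    by_cases hab : P (a₀, true) (a₀, false)
    · rw [cfgOf, if_pos hab]
      simp only [inC, true_iff]
      exact P.trans (blockA a₀ U₀ P hP hU hab p hp)
        (P.symm (blockA a₀ U₀ P hP hU hab p' hp'))
    · rw [cfgOf, if_neg hab]
      simp only [inC]
      obtain ⟨q, b⟩ := p
      obtain ⟨q', b'⟩ := p'
      rw [memclaim a₀ U₀ P hP hU hab q b hp, memclaim a₀ U₀ P hP hU hab q' b' hp']
      constructor
      · intro h
        by_cases hqa : P (q, b) (a₀, true)
        · exact P.trans hqa (P.symm (h.mp hqa))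
        · have hq'a : ¬ P (q', b') (a₀, true) := fun t => hqa (h.mpr t)
          have h1 : P (q, b) (a₀, false) := by
            obtain ⟨c, hc⟩ := (Umem a₀ U₀ P hU q).mp hp
            have hcb : c = !b := by
              cases c <;> cases b <;> simp_all
            subst hcb
            exact (flipa a₀ P hP (q, b)).mp hc
          have h2 : P (q', b') (a₀, false) := by
            obtain ⟨c, hc⟩ := (Umem a₀ U₀ P hU q').mp hp'
            have hcb : c = !b' := by
              cases c <;> cases b' <;> simp_all
            subst hcb
            exact (flipa a₀ P hP (q', b')).mp hc
          exact P.trans h1 (P.symm h2)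
      · intro h
        exact ⟨fun t => P.trans (P.symm h) t, fun t => P.trans h t⟩
  · constructor
    · rintro (⟨_, h2, _⟩ | ⟨h1, _, _⟩)
      · exact absurd h2 hp'
      · exact absurd hp h1
    · intro h
      exact absurd (Ublock a₀ U₀ P hP hU p p' h hp) hp'
  · constructor
    · rintro (⟨h1, _, _⟩ | ⟨_, h2, _⟩)
      · exact absurd h1 hp
      · exact absurd hp' h2
    · intro h
      exact absurd (Ublock a₀ U₀ P hP hU p' p (P.symm h) hp') hp
  · constructor
    · rintro (⟨h1, _, _⟩ | ⟨h1, h2, h3⟩)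
      · exact absurd h1 hp
      · exact h3
    · intro h
      exact Or.inr ⟨hp, hp', h⟩

end Reconstruct

section RightInv
variable {α : Type*} [Fintype α] (a₀ : α) (U₀ : Finset α) (hU₀ : a₀ ∈ U₀)
variable (c : Option {V : Finset α // V ⊆ U₀.erase a₀}) (Q : Setoid ({q : α // q ∉ U₀} × Bool))

include hU₀ in
private lemma cfgOf_Rsetoid : cfgOf a₀ U₀ (Rsetoid a₀ U₀ c Q) = c := by
  cases c with
  | none =>
    have h : Rsetoid a₀ U₀ none Q (a₀, true) (a₀, false) :=
      Or.inl ⟨hU₀, hU₀, trivial⟩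
    rw [cfgOf, if_pos h]
  | some V =>
    have haV : a₀ ∉ V.1 := fun h => (Finset.mem_erase.mp (V.2 h)).1 rfl
    have h : ¬ Rsetoid a₀ U₀ (some V) Q (a₀, true) (a₀, false) := by
      rintro (⟨_, _, h3⟩ | ⟨h1, _, _⟩)
      · simp only [inC, memB, if_neg haV] at h3
        simp at h3
      · exact absurd hU₀ h1
    rw [cfgOf, if_neg h]
    congr 1
    apply Subtype.ext
    ext q
    simp only [Finset.mem_filter, Finset.mem_erase]
    constructor
    · rintro ⟨⟨hqa, hq⟩, (⟨_, _, h3⟩ | ⟨h1, _, _⟩)⟩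
      · simp only [inC, memB, if_neg haV] at h3
        by_cases hqV : q ∈ V.1
        · exact hqV
        · rw [if_neg hqV] at h3
          simp at h3
      · exact absurd hq h1
    · intro hqV
      have hqe := Finset.mem_erase.mp (V.2 hqV)
      refine ⟨hqe, Or.inl ⟨hqe.2, hU₀, ?_⟩⟩
      simp [inC, memB, if_neg haV, if_pos hqV]

private lemma Qof_Rsetoid : Qof U₀ (Rsetoid a₀ U₀ c Q) = Q := by
  apply Setoid.ext
  intro p p'
  show Rrel a₀ U₀ c Q ((p.1 : α), p.2) ((p'.1 : α), p'.2) ↔ Q p p'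
  constructor
  · rintro (⟨h1, _, _⟩ | ⟨h1, h2, h3⟩)
    · exact absurd h1 p.1.2
    · exact h3
  · intro h
    exact Or.inr ⟨p.1.2, p'.1.2, h⟩

end RightInv

section Fiber
variable {α : Type*} [Fintype α] (a₀ : α) (U₀ : Finset α)

private noncomputable def fiberEquiv (hU₀ : a₀ ∈ U₀) :
    {P : {P : Setoid (α × Bool) // Setoid.comap (stdInv α) P = P} // Ufin a₀ P.1 = U₀} ≃
      (Option {V : Finset α // V ⊆ U₀.erase a₀}) ×
        {Q : Setoid ({q : α // q ∉ U₀} × Bool) // Setoid.comap (stdInv _) Q = Q} where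
  toFun P := (cfgOf a₀ U₀ P.1.1, ⟨Qof U₀ P.1.1, Qof_inv U₀ P.1.1 P.1.2⟩)
  invFun cQ := ⟨⟨Rsetoid a₀ U₀ cQ.1 cQ.2.1, Rsetoid_inv a₀ U₀ cQ.1 cQ.2.1 cQ.2.2⟩,
    Rsetoid_Ufin a₀ U₀ hU₀ cQ.1 cQ.2.1⟩
  left_inv P := by
    apply Subtype.ext
    apply Subtype.ext
    exact reconstruct a₀ U₀ P.1.1 P.1.2 P.2 hU₀
  right_inv cQ := by
    refine Prod.ext ?_ ?_
    · exact cfgOf_Rsetoid a₀ U₀ hU₀ cQ.1 cQ.2.1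
    · apply Subtype.ext
      exact Qof_Rsetoid a₀ U₀ cQ.1 cQ.2.1

end Fiber


private lemma nat_card_option (A : Type*) [Finite A] :
    Nat.card (Option A) = Nat.card A + 1 := by
  haveI := Fintype.ofFinite A
  simp [Nat.card_eq_fintype_card]

private lemma nat_card_subsets {α : Type*} [DecidableEq α] (W : Finset α) :
    Nat.card {V : Finset α // V ⊆ W} = 2 ^ W.card := by
  have e : {V : Finset α // V ⊆ W} ≃ {V : Finset α // V ∈ W.powerset} :=
    Equiv.subtypeEquivRight (by simp [Finset.mem_powerset])
  rw [Nat.card_congr e]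
  have : Nat.card {V : Finset α // V ∈ W.powerset} = W.powerset.card :=
    Nat.card_eq_finsetCard _
  rw [this, Finset.card_powerset]

private lemma nat_card_sigma {ι : Type*} [Fintype ι] (f : ι → Type*) [∀ i, Finite (f i)] :
    Nat.card (Σ i, f i) = ∑ i, Nat.card (f i) := by
  haveI : ∀ i, Fintype (f i) := fun i => Fintype.ofFinite _
  simp [Nat.card_eq_fintype_card]

universe u

private lemma master (n : ℕ) : ∀ (α : Type u) [Fintype α], Fintype.card α = n →
    Nat.card {P : Setoid (α × Bool) // Setoid.comap (stdInv α) P = P} = Brec n := by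
  induction n using Nat.strong_induction_on with
  | _ n ih =>
  intro α _ hcard
  rcases n with _ | n
  · haveI : IsEmpty α := Fintype.card_eq_zero_iff.mp hcard
    haveI : IsEmpty (α × Bool) := ⟨fun p => IsEmpty.false p.1⟩
    haveI hsub : Subsingleton (Setoid (α × Bool)) :=
      ⟨fun P Q => Setoid.ext fun a _ => (IsEmpty.false a).elim⟩
    haveI : Unique {P : Setoid (α × Bool) // Setoid.comap (stdInv α) P = P} :=
      { default := ⟨⊤, Subsingleton.elim _ _⟩
        uniq := fun P => Subtype.ext (Subsingleton.elim _ _) }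
    rw [Nat.card_unique]
    simp [Brec]
  · have hpos : 0 < Fintype.card α := by omega
    obtain ⟨a₀⟩ := Fintype.card_pos_iff.mp hpos
    -- the fibering map
    set g : {P : Setoid (α × Bool) // Setoid.comap (stdInv α) P = P} →
        {U : Finset α // a₀ ∈ U} :=
      fun P => ⟨Ufin a₀ P.1, by simp only [Ufin, Finset.mem_filter, Finset.mem_univ, true_and]
                                exact ⟨true, P.1.refl _⟩⟩ with hg
    rw [Nat.card_congr (Equiv.sigmaFiberEquiv g).symm, nat_card_sigma]
    have hfib : ∀ U : {U : Finset α // a₀ ∈ U},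
        Nat.card {P // g P = U} =
          (2 ^ (U.1.erase a₀).card + 1) * Brec (n + 1 - U.1.card) := by
      intro U
      have e2 : {P // g P = U} ≃
          (Option {V : Finset α // V ⊆ U.1.erase a₀}) ×
            {Q : Setoid ({q : α // q ∉ U.1} × Bool) // Setoid.comap (stdInv _) Q = Q} :=
        (Equiv.subtypeEquivRight (fun P => by
          constructor
          · intro h; exact congrArg Subtype.val h
          · intro h; exact Subtype.ext h)).trans (fiberEquiv a₀ U.1 U.2)
      rw [Nat.card_congr e2, Nat.card_prod, nat_card_option, nat_card_subsets]
      have hUpos : 0 < U.1.card := Finset.card_pos.mpr ⟨a₀, U.2⟩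
      have hUle : U.1.card ≤ n + 1 := by
        rw [← hcard]
        exact Finset.card_le_card (Finset.subset_univ _)
      have hγ : Fintype.card {q : α // q ∉ U.1} = n + 1 - U.1.card := by
        rw [Fintype.card_subtype_compl, hcard]
        congr 1
        exact Fintype.card_coe U.1
      rw [ih (n + 1 - U.1.card) (by omega) _ hγ]
    rw [Finset.sum_congr rfl (fun U _ => hfib U)]
    -- turn the subtype sum into a filtered-Finset sum
    have hsub : ∑ U : {U : Finset α // a₀ ∈ U},
        (2 ^ (U.1.erase a₀).card + 1) * Brec (n + 1 - U.1.card) =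
        ∑ U ∈ Finset.univ.filter (fun U : Finset α => a₀ ∈ U),
          (2 ^ (U.erase a₀).card + 1) * Brec (n + 1 - U.card) :=
      (Finset.sum_subtype (p := fun U : Finset α => a₀ ∈ U)
        (Finset.univ.filter (fun U : Finset α => a₀ ∈ U))
        (fun U => by simp) (fun U => (2 ^ (U.erase a₀).card + 1) * Brec (n + 1 - U.card))).symm
    rw [hsub]
    -- bijection with the powerset of univ.erase a₀
    have hbij : ∑ U ∈ Finset.univ.filter (fun U : Finset α => a₀ ∈ U),
        (2 ^ (U.erase a₀).card + 1) * Brec (n + 1 - U.card) =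
        ∑ W ∈ (Finset.univ.erase a₀).powerset,
          (2 ^ W.card + 1) * Brec (n - W.card) := by
      refine Finset.sum_bij' (fun U _ => U.erase a₀) (fun W _ => insert a₀ W) ?_ ?_ ?_ ?_ ?_
      · intro U hU
        simp only [Finset.mem_powerset]
        intro x hx
        rcases Finset.mem_erase.mp hx with ⟨hx1, hx2⟩
        exact Finset.mem_erase.mpr ⟨hx1, Finset.mem_univ x⟩
      · intro W hW
        simp only [Finset.mem_filter, Finset.mem_univ, true_and]
        exact Finset.mem_insert_self a₀ W
      · intro U hU
        simp only [Finset.mem_filter] at hU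
        exact Finset.insert_erase hU.2
      · intro W hW
        simp only [Finset.mem_powerset] at hW
        have haW : a₀ ∉ W := fun h => (Finset.mem_erase.mp (hW h)).1 rfl
        exact Finset.erase_insert haW
      · intro U hU
        simp only [Finset.mem_filter] at hU
        have h1 : (U.erase a₀).card = U.card - 1 := Finset.card_erase_of_mem hU.2
        have h2 : 0 < U.card := Finset.card_pos.mpr ⟨a₀, hU.2⟩
        rw [h1]
        have h3 : n + 1 - U.card = n - (U.card - 1) := by omega
        rw [h3]
    rw [hbij]
    have hcarde : (Finset.univ.erase a₀).card = n := by
      rw [Finset.card_erase_of_mem (Finset.mem_univ a₀), Finset.card_univ, hcard]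
      omega
    rw [Finset.sum_powerset]
    rw [hcarde]
    rw [show Brec (n+1) = ∑ i ∈ Finset.range (n+1), n.choose i * (2^i + 1) * Brec (n - i)
      from by rw [Brec]]
    refine Finset.sum_congr rfl fun i hi => ?_
    have hin : ∀ W ∈ Finset.powersetCard i (Finset.univ.erase a₀),
        (2 ^ W.card + 1) * Brec (n - W.card) = (2 ^ i + 1) * Brec (n - i) := by
      intro W hW
      rw [(Finset.mem_powersetCard.mp hW).2]
    rw [Finset.sum_congr rfl hin, Finset.sum_const, Finset.card_powersetCard, hcarde,
      smul_eq_mul, mul_assoc]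

end Master


/-- **Theorem 3.1.**  The exponential generating function `∑_k H(k) x^k / k!` of the
number `H(k)` of partitions of a `2k`-element set invariant under a fixed-point-free
involution with `k` transpositions equals `exp((1/2)(e^x + 3)(e^x - 1))`; i.e. the
`k`-th Taylor coefficient (times `k!`) of that function at `0` is `H(k)`. -/
theorem egf_fixed_point_free_involution (k : ℕ) (S : Type*) [Fintype S]
    (σ : Equiv.Perm S) (hinv : σ * σ = 1) (hfpf : ∀ x, σ x ≠ x)
    (hcard : Fintype.card S = 2 * k) :
    iteratedDeriv k (fun x : ℝ =>
        Real.exp ((1 / 2) * (Real.exp x + 3) * (Real.exp x - 1))) 0 =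
      Nat.card {P : Setoid S // Setoid.comap σ P = P} := by
  have hσ : ∀ x, σ (σ x) = x := fun x => by
    have h := Equiv.ext_iff.mp hinv x
    simpa using h
  have hmc := modelCard σ hσ hfpf
  haveI : Finite (Quotient (pairSetoid σ hσ)) := Quotient.finite _
  haveI : Fintype (Quotient (pairSetoid σ hσ)) := Fintype.ofFinite _
  have hcardQ : Fintype.card (Quotient (pairSetoid σ hσ)) = k := by
    have h1 : Nat.card S = 2 * k := by rw [Nat.card_eq_fintype_card, hcard]
    rw [h1, Nat.card_eq_fintype_card] at hmc
    omega
  have h2 : Nat.card {P : Setoid S // Setoid.comap σ P = P}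
      = Nat.card {P : Setoid ((Quotient (pairSetoid σ hσ)) × Bool) //
          Setoid.comap (stdInv _) P = P} :=
    Nat.card_congr (conjEquiv (modelEquiv σ hσ hfpf) σ (stdInv _) (modelEquiv_comm σ hσ hfpf))
  rw [h2, master k _ hcardQ]
  exact anal k
end

section
/- The two generating function representations of the same count agree: for all t ≥ 0, the coefficient of y^t x^1 / (t! 1!) in exp(e^{x+y} + (1/2)e^{2y} − 3/2) equals the coefficient of y^t / t! in exp(2e^y − 2 + y + (1/2)(e^y − 1)^2). -/
/-! The identity already holds before differentiating in `y`: the `x`-derivative at `0` multiplies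
the integrand by `e^y = exp y`, which folds into the exponent as the summand `y`, and the
remaining exponents agree since `e^{2y} = (e^y)^2`. -/

open Real

lemma deriv_exp_exp_add_add_at_zero (y c : ℝ) :
    deriv (fun x => exp (exp (x + y) + c)) 0 = exp (exp y + c + y) := by
  have h := (((hasDerivAt_id (0 : ℝ)).add_const y).exp.add_const c).exp
  rw [mul_one, ← exp_add, id, zero_add] at h
  exact h.deriv

lemma exp_add_half_exp_two_mul_sub (y : ℝ) :
    exp y + (1 / 2 * exp (2 * y) - 3 / 2) + y =
      2 * exp y - 2 + y + 1 / 2 * (exp y - 1) ^ 2 := by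
  rw [two_mul, exp_add]
  ring

/-- The two generating-function representations of the same count agree: for all `t`,
the coefficient of `y^t x^1 / (t! 1!)` in `exp(e^{x+y} + (1/2)e^{2y} - 3/2)` equals the
coefficient of `y^t / t!` in `exp(2e^y - 2 + y + (1/2)(e^y - 1)^2)`.  (Extracting EGF
coefficients via iterated differentiation at `0`.) -/
theorem bivariate_egf_at_u_one_eq_rotation_egf (t : ℕ) :
    iteratedDeriv t (fun y : ℝ =>
        iteratedDeriv 1 (fun x : ℝ =>
          Real.exp (Real.exp (x + y) + (1 / 2) * Real.exp (2 * y) - 3 / 2)) 0) 0 =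
      iteratedDeriv t (fun y : ℝ =>
        Real.exp (2 * Real.exp y - 2 + y + (1 / 2) * (Real.exp y - 1) ^ 2)) 0 := by
  congr 1
  funext y
  simp only [iteratedDeriv_one, add_sub_assoc]
  rw [deriv_exp_exp_add_add_at_zero, exp_add_half_exp_two_mul_sub]
end
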